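/- For any finite family of words w₁, …, wₙ over S (n ≥ 1), there exists a word w over S such that w₁S ∩ w₂S ∩ ⋯ ∩ wₙS = wS. In particular, the family of constructible right ideals {wS : w a word over S} ∪ {∅} is closed under finite intersections. -/

import Mathlib

/-- The action of a word over `S` (a list of pairs `(p, ε)` with `p ∈ S` and
`ε ∈ {+1, −1}` encoded as a `Bool`) on subsets of `S`:
`p^{+1} X = {p x : x ∈ X}` and `p^{−1} X = {q ∈ S : p q ∈ X}`. -/
def wordAct {G : Type*} [Group G] (S : Set G) : List (G × Bool) → Set G → Set G
  | [], X => X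
  | l :: w, X =>
    if l.2 then (fun x => l.1 * x) '' wordAct S w X
    else {q | q ∈ S ∧ l.1 * q ∈ wordAct S w X}

def constructibleIdeals {G : Type*} [Group G] (S : Submonoid G) : Set (Set G) :=
  {X | X = ∅ ∨ ∃ w : List (G × Bool), (∀ l ∈ w, l.1 ∈ S) ∧
    X = wordAct (S : Set G) w (S : Set G)}

/-!
For a word `w` over `S` and `A ⊆ S` one has `w (A ∩ w⁻¹ X) = wA ∩ X`. For a single letter this is
`p (A ∩ p⁻¹ X) = pA ∩ X` and `p⁻¹ (A ∩ p X) = p⁻¹ A ∩ X` (left cancellation in `G`), and the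
identities compose along the word since `wA ⊆ S`. Taking `A = S` and `X = w₂S` gives
`w₁S ∩ w₂S = (w₁ w₁⁻¹ w₂) S`, and an induction on the number of words handles finite intersections.
-/

section

variable {G : Type*} [Group G] (S : Submonoid G)

def wordInv {α : Type*} (w : List (α × Bool)) : List (α × Bool) :=
  (w.map fun l => (l.1, !l.2)).reverse

lemma wordInv_cons {α : Type*} (l : α × Bool) (w : List (α × Bool)) :
    wordInv (l :: w) = wordInv w ++ [(l.1, !l.2)] := by
  simp [wordInv]

lemma wordInv_fst_mem {w : List (G × Bool)} (hw : ∀ l ∈ w, l.1 ∈ S) :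
    ∀ l ∈ wordInv w, l.1 ∈ S := by
  simp only [wordInv, List.mem_reverse, List.mem_map]
  rintro _ ⟨l, hl, rfl⟩
  exact hw l hl

lemma wordAct_append (T : Set G) (a b : List (G × Bool)) (X : Set G) :
    wordAct T (a ++ b) X = wordAct T a (wordAct T b X) := by
  induction a with
  | nil => rfl
  | cons l a ih => simp [wordAct, ih]

lemma wordAct_subset {w : List (G × Bool)} (hw : ∀ l ∈ w, l.1 ∈ S) {X : Set G}
    (hX : X ⊆ S) : wordAct S w X ⊆ S := by
  induction w with
  | nil => exact hX
  | cons l w ih =>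
    have hwX := ih fun l hl => hw l (List.mem_cons_of_mem _ hl)
    by_cases hl : l.2
    · simp only [wordAct, hl, if_true]
      rintro _ ⟨y, hy, rfl⟩
      exact S.mul_mem (hw l List.mem_cons_self) (hwX hy)
    · simp only [wordAct, hl]
      exact fun _ hx => hx.1

lemma wordAct_singleton_inter_flip (l : G × Bool) {A : Set G} (hA : A ⊆ S) (X : Set G) :
    wordAct S [l] (A ∩ wordAct S [(l.1, !l.2)] X) = wordAct S [l] A ∩ X := by
  obtain ⟨p, _ | _⟩ := l <;> ext x <;> simp only [wordAct, Bool.not_false, Bool.not_true]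
  · constructor
    · rintro ⟨hxS, hxA, y, hy, hyx⟩
      obtain rfl := mul_left_cancel hyx
      exact ⟨⟨hxS, hxA⟩, hy⟩
    · rintro ⟨⟨hxS, hxA⟩, hx⟩
      exact ⟨hxS, hxA, x, hx, rfl⟩
  · constructor
    · rintro ⟨y, ⟨hyA, -, hy⟩, rfl⟩
      exact ⟨⟨y, hyA, rfl⟩, hy⟩
    · rintro ⟨⟨y, hyA, rfl⟩, hx⟩
      exact ⟨y, ⟨hyA, hA hyA, hx⟩, rfl⟩

lemma wordAct_inter_wordInv {w : List (G × Bool)} (hw : ∀ l ∈ w, l.1 ∈ S) {A : Set G}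
    (hA : A ⊆ S) (X : Set G) :
    wordAct S w (A ∩ wordAct S (wordInv w) X) = wordAct S w A ∩ X := by
  induction w generalizing X with
  | nil => rfl
  | cons l w ih =>
    have hw' : ∀ a ∈ w, a.1 ∈ S := fun a ha => hw a (List.mem_cons_of_mem _ ha)
    rw [wordInv_cons, wordAct_append, ← List.singleton_append, wordAct_append, wordAct_append,
      ih hw', wordAct_singleton_inter_flip S l (wordAct_subset S hw' hA)]

lemma wordAct_wordAct_wordInv {w : List (G × Bool)} (hw : ∀ l ∈ w, l.1 ∈ S) {X : Set G}
    (hX : X ⊆ S) : wordAct S w (wordAct S (wordInv w) X) = wordAct S w S ∩ X := by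
  rw [← wordAct_inter_wordInv S hw le_rfl,
    Set.inter_eq_right.mpr (wordAct_subset S (wordInv_fst_mem S hw) hX)]

lemma wordAct_inter_wordAct {w₁ w₂ : List (G × Bool)} (hw₁ : ∀ l ∈ w₁, l.1 ∈ S)
    (hw₂ : ∀ l ∈ w₂, l.1 ∈ S) :
    wordAct S w₁ S ∩ wordAct S w₂ S = wordAct S (w₁ ++ wordInv w₁ ++ w₂) S := by
  rw [wordAct_append, wordAct_append, wordAct_wordAct_wordInv S hw₁ (wordAct_subset S hw₂ le_rfl)]

lemma append_wordInv_append_fst_mem {w₁ w₂ : List (G × Bool)} (hw₁ : ∀ l ∈ w₁, l.1 ∈ S)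
    (hw₂ : ∀ l ∈ w₂, l.1 ∈ S) : ∀ l ∈ w₁ ++ wordInv w₁ ++ w₂, l.1 ∈ S := by
  simp only [List.mem_append]
  rintro l ((hl | hl) | hl)
  exacts [hw₁ l hl, wordInv_fst_mem S hw₁ l hl, hw₂ l hl]

lemma exists_wordAct_eq_iInter (n : ℕ) (ws : Fin (n + 1) → List (G × Bool))
    (hws : ∀ i, ∀ l ∈ ws i, l.1 ∈ S) :
    ∃ w : List (G × Bool), (∀ l ∈ w, l.1 ∈ S) ∧ ⋂ i, wordAct S (ws i) S = wordAct S w S := by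
  induction n with
  | zero => exact ⟨ws 0, hws 0, iInf_unique (ι := Fin 1) _⟩
  | succ n ih =>
    obtain ⟨w, hw, hw_eq⟩ := ih (fun i => ws i.succ) fun i => hws i.succ
    refine ⟨ws 0 ++ wordInv (ws 0) ++ w, append_wordInv_append_fst_mem S (hws 0) hw, ?_⟩
    rw [← wordAct_inter_wordAct S (hws 0) hw, ← hw_eq]
    ext x
    simp only [Set.mem_iInter, Set.mem_inter_iff, Fin.forall_fin_succ]

end

/-- For any finite family of words `w₁, …, wₙ` over `S` (`n ≥ 1`), there exists
a word `w` over `S` such that `w₁S ∩ ⋯ ∩ wₙS = wS`.  In particular, the family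
of constructible right ideals `{wS : w a word over S} ∪ {∅}` is closed under
finite (here: binary) intersections. -/
theorem word_iInter_act {G : Type*} [Group G] (S : Submonoid G) :
    (∀ (n : ℕ), 1 ≤ n → ∀ ws : Fin n → List (G × Bool),
      (∀ i, ∀ l ∈ ws i, l.1 ∈ S) →
      ∃ w : List (G × Bool), (∀ l ∈ w, l.1 ∈ S) ∧
        (⋂ i, wordAct (S : Set G) (ws i) (S : Set G)) =
          wordAct (S : Set G) w (S : Set G)) ∧
    (∀ A ∈ constructibleIdeals S, ∀ B ∈ constructibleIdeals S,
      A ∩ B ∈ constructibleIdeals S) := by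
  refine ⟨fun n hn => ?_, ?_⟩
  · obtain ⟨m, rfl⟩ := Nat.exists_eq_add_of_le' hn
    exact exists_wordAct_eq_iInter S m
  · rintro A (rfl | ⟨w₁, hw₁, rfl⟩) B hB
    · exact Or.inl (Set.empty_inter B)
    rcases hB with rfl | ⟨w₂, hw₂, rfl⟩
    · exact Or.inl (Set.inter_empty _)
    exact Or.inr ⟨_, append_wordInv_append_fst_mem S hw₁ hw₂, wordAct_inter_wordAct S hw₁ hw₂⟩
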